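/- Let φ(z) ∈ ℂ(z) be a rational map of degree r ≥ 2. If φ² = φ∘φ is not a polynomial, then the number of distinct poles of φⁿ tends to infinity as n → ∞. -/

import Mathlib

/-!
Let `S n` be the set of poles of `φⁿ`. As `φ` is surjective with finite fibres, it maps
`S (n + 1)` onto `S n`, so `#S n` is nondecreasing. If it stayed bounded it would be eventually
constant, making `φ` injective on `S (n + 1)`: every point of `S (n + 1)` would be totally
ramified for all large `n`. But a rational map of degree `r ≥ 2` has at most two totally ramified
points. Here this Riemann–Hurwitz bound comes from the Wronskian `W = u v' - u' v`: it is nonzero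
of degree at most `2r - 2`, divisible by `(X - p) ^ (r - 1)` at each finite totally ramified
point `p`, and of degree at most `r - 1` if `∞` is totally ramified. So two of `S (N + 1)`,
`S (N + 2)`, `S (N + 3)` coincide, and pulling back along the surjection `φ` gives
`S 2 = S 0 = {∞}`, i.e. `φ²` is a polynomial.
-/

open Polynomial OnePoint Filter
open scoped Classical

/-- The self-map of `ℙ¹(F) = F ∪ {∞}` induced by the rational function `u/v`. -/
noncomputable def ratMap {F : Type*} [Field F] (u v : Polynomial F) :
    OnePoint F → OnePoint F :=
  fun P =>
    Option.rec
      (if v.natDegree < u.natDegree then (∞ : OnePoint F)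
       else if u.natDegree < v.natDegree then ((0 : F) : OnePoint F)
       else ((u.leadingCoeff / v.leadingCoeff : F) : OnePoint F))
      (fun z => if v.eval z = 0 then (∞ : OnePoint F)
                else ((u.eval z / v.eval z : F) : OnePoint F))
      P

section Dynamics

variable {α β : Type*}

/-- For a rational map of degree `r`, whose fibres have `r` points counted with multiplicity,
a one-point fibre is exactly a totally ramified point. -/
def IsTotallyRamified (f : α → β) (x : α) : Prop :=
  f ⁻¹' {f x} = {x}

lemma IsTotallyRamified.eq_of_apply_eq {f : α → β} {x y : α} (hx : IsTotallyRamified f x)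
    (h : f y = f x) : y = x :=
  hx.subset h

lemma Monotone.exists_eq_add_of_not_tendsto {g : ℕ → ℕ} (hg : Monotone g)
    (h : ¬ Tendsto g atTop atTop) (k : ℕ) : ∃ N, g (N + k) = g N := by
  by_contra! hne
  have hgrow : ∀ m, m ≤ g (k * m) := by
    intro m
    induction m with
    | zero => exact Nat.zero_le _
    | succ m ih =>
      have := lt_of_le_of_ne (hg (Nat.le_add_right (k * m) k)) (hne (k * m)).symm
      rw [Nat.mul_succ]
      omega
  exact h (tendsto_atTop_atTop_of_monotone hg fun m => ⟨k * m, hgrow m⟩)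

lemma eq_or_eq_or_eq_of_ncard_eq {T A B C : Set α}
    (hT : ∀ a ∈ T, ∀ b ∈ T, ∀ c ∈ T, a = b ∨ a = c ∨ b = c)
    (hAT : A ⊆ T) (hBT : B ⊆ T) (hCT : C ⊆ T) (hA : A.Finite) (hA' : A.Nonempty)
    (hAB : A.ncard = B.ncard) (hAC : A.ncard = C.ncard) : A = B ∨ A = C ∨ B = C := by
  by_cases hpair : ∃ x ∈ A, ∃ y ∈ A, x ≠ y
  · obtain ⟨x, hx, y, hy, hxy⟩ := hpair
    have hBA : B ⊆ A := fun z hz => by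
      rcases hT x (hAT hx) y (hAT hy) z (hBT hz) with h | h | h
      exacts [absurd h hxy, h ▸ hx, h ▸ hy]
    exact Or.inl (Set.eq_of_subset_of_ncard_le hBA hAB.le hA).symm
  · push Not at hpair
    obtain ⟨a, rfl⟩ := (Set.Subsingleton.eq_empty_or_singleton hpair).resolve_left
      hA'.ne_empty
    rw [Set.ncard_singleton, eq_comm, Set.ncard_eq_one] at hAB hAC
    obtain ⟨b, rfl⟩ := hAB
    obtain ⟨c, rfl⟩ := hAC
    rcases hT a (hAT rfl) b (hBT rfl) c (hCT rfl) with h | h | h <;> simp [h]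

variable {f : α → α}

lemma isTotallyRamified_of_ncard_preimage_eq (hf : f.Surjective) {s : Set α}
    (hfin : (f ⁻¹' s).Finite) (hcard : (f ⁻¹' s).ncard = s.ncard) {x : α} (hx : f x ∈ s) :
    IsTotallyRamified f x := by
  have hinj : Set.InjOn f (f ⁻¹' s) :=
    Set.injOn_of_ncard_image_eq (by rw [Set.image_preimage_eq s hf, hcard]) hfin
  refine Set.eq_singleton_iff_unique_mem.mpr ⟨rfl, fun y hy => ?_⟩
  exact hinj (show f y ∈ s from (hy : f y = f x) ▸ hx) hx hy

lemma preimage_iterate_succ (f : α → α) (n : ℕ) (s : Set α) :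
    f^[n + 1] ⁻¹' s = f ⁻¹' (f^[n] ⁻¹' s) := by
  rw [Function.iterate_succ, Set.preimage_comp]

lemma finite_preimage_iterate (hfin : ∀ y, (f ⁻¹' {y}).Finite) {s : Set α} (hs : s.Finite)
    (n : ℕ) : (f^[n] ⁻¹' s).Finite := by
  induction n with
  | zero => exact hs
  | succ n ih => exact preimage_iterate_succ f n s ▸ ih.preimage' fun y _ => hfin y

lemma monotone_ncard_preimage_iterate (hf : f.Surjective) (hfin : ∀ y, (f ⁻¹' {y}).Finite)
    {s : Set α} (hs : s.Finite) : Monotone fun n => (f^[n] ⁻¹' s).ncard :=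
  monotone_nat_of_le_succ fun n => by
    simpa only [preimage_iterate_succ, Set.image_preimage_eq _ hf] using
      Set.ncard_image_le (f := f) (finite_preimage_iterate hfin hs (n + 1))

lemma preimage_iterate_eq_of_add_eq (hf : f.Surjective) {s : Set α} {a d : ℕ}
    (h : f^[a + d] ⁻¹' s = f^[a] ⁻¹' s) : f^[d] ⁻¹' s = s := by
  rw [add_comm, Function.iterate_add, Set.preimage_comp] at h
  exact (hf.iterate a).preimage_injective h

theorem tendsto_ncard_preimage_iterate (hf : f.Surjective) (hfin : ∀ y, (f ⁻¹' {y}).Finite)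
    (hram : ∀ a b c, IsTotallyRamified f a → IsTotallyRamified f b → IsTotallyRamified f c →
      a = b ∨ a = c ∨ b = c)
    {s : Set α} (hs : s.Finite) (hs' : s.Nonempty) (h2 : f^[2] ⁻¹' s ≠ s) :
    Tendsto (fun n => (f^[n] ⁻¹' s).ncard) atTop atTop := by
  set S : ℕ → Set α := fun n => f^[n] ⁻¹' s
  have hsucc (n : ℕ) : S (n + 1) = f ⁻¹' S n := preimage_iterate_succ f n s
  have hmono : Monotone fun n => (S n).ncard := monotone_ncard_preimage_iterate hf hfin hs
  by_contra htend
  obtain ⟨N, hN⟩ := hmono.exists_eq_add_of_not_tendsto htend 3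
  have hstable : ∀ n, N ≤ n → n < N + 3 → (S (n + 1)).ncard = (S n).ncard := by
    intro n hn hn3
    have h₁ : (S n).ncard ≤ (S (n + 1)).ncard := hmono n.le_succ
    have h₂ : (S (n + 1)).ncard ≤ (S (N + 3)).ncard := hmono (by omega)
    have h₃ : (S N).ncard ≤ (S n).ncard := hmono hn
    have h₄ : (S (N + 3)).ncard = (S N).ncard := hN
    omega
  have hramified : ∀ n, N ≤ n → n < N + 3 → S (n + 1) ⊆ {x | IsTotallyRamified f x} :=
    fun n hn hn3 x hx => isTotallyRamified_of_ncard_preimage_eq hf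
      (hsucc n ▸ finite_preimage_iterate hfin hs _) (hsucc n ▸ hstable n hn hn3)
      (by rwa [hsucc] at hx)
  have hper : f^[1] ⁻¹' s = s ∨ f^[2] ⁻¹' s = s := by
    rcases eq_or_eq_or_eq_of_ncard_eq (fun a ha b hb c hc => hram a b c ha hb hc)
      (hramified N le_rfl (by omega)) (hramified (N + 1) (by omega) (by omega))
      (hramified (N + 2) (by omega) (by omega)) (finite_preimage_iterate hfin hs _)
      (hs'.preimage (hf.iterate _)) (hstable (N + 1) (by omega) (by omega)).symm
      (by rw [hstable (N + 2) (by omega) (by omega), hstable (N + 1) (by omega) (by omega)])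
      with h | h | h
    · exact Or.inl (preimage_iterate_eq_of_add_eq hf h.symm)
    · exact Or.inr (preimage_iterate_eq_of_add_eq hf h.symm)
    · exact Or.inl (preimage_iterate_eq_of_add_eq hf h.symm)
  exact h2 (hper.elim (fun h1 => Function.IsFixedPt.preimage_iterate (f := f) h1 2) id)

end Dynamics

section RationalMap

variable {F : Type*} [Field F] {u v : F[X]}

noncomputable def fiberPoly (u v : F[X]) (Q : OnePoint F) : F[X] :=
  Q.elim v fun c => u - C c * v

@[simp] lemma fiberPoly_infty : fiberPoly u v ∞ = v := rfl

@[simp] lemma fiberPoly_coe (c : F) : fiberPoly u v c = u - C c * v := rfl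

lemma ratMap_coe_eq_iff (hcop : IsCoprime u v) (z : F) (Q : OnePoint F) :
    ratMap u v z = Q ↔ (fiberPoly u v Q).eval z = 0 := by
  change (if v.eval z = 0 then ∞ else ((u.eval z / v.eval z : F) : OnePoint F)) = Q ↔ _
  induction Q using OnePoint.rec with
  | infty => split_ifs with hz <;> simp [hz]
  | coe c =>
    split_ifs with hz
    · have hu : u.eval z ≠ 0 := fun hu => by
        obtain ⟨a, b, hab⟩ := hcop
        simpa [hu, hz] using congrArg (eval z) hab
      simp [hz, hu]
    · simp [div_eq_iff hz, sub_eq_zero]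

/-- In homogeneous coordinates `∞ = [1 : 0]`, where the degree-`r` homogenisation of a
polynomial takes the value of its coefficient of degree `r`. -/
lemma ratMap_infty_eq_iff (hv : v ≠ 0) {r : ℕ} (hr : r = max u.natDegree v.natDegree)
    (Q : OnePoint F) : ratMap u v ∞ = Q ↔ (fiberPoly u v Q).coeff r = 0 := by
  change (if v.natDegree < u.natDegree then ∞ else if u.natDegree < v.natDegree then
    ((0 : F) : OnePoint F) else ((u.leadingCoeff / v.leadingCoeff : F) : OnePoint F)) = Q ↔ _
  have hlv : v.leadingCoeff ≠ 0 := leadingCoeff_ne_zero.mpr hv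
  induction Q using OnePoint.rec with
  | infty =>
    split_ifs with h₁ h₂
    · simp [coeff_eq_zero_of_natDegree_lt (hr ▸ lt_max_of_lt_left h₁ : v.natDegree < r)]
    · simpa [show r = v.natDegree by omega] using hlv
    · simpa [show r = v.natDegree by omega] using hlv
  | coe c =>
    simp only [fiberPoly_coe, coeff_sub, coeff_C_mul, sub_eq_zero]
    split_ifs with h₁ h₂
    · have hu : u ≠ 0 := by rintro rfl; simp at h₁
      simp [show r = u.natDegree by omega, coeff_eq_zero_of_natDegree_lt h₁, hu]
    · simp [show r = v.natDegree by omega, coeff_eq_zero_of_natDegree_lt h₂, hlv, eq_comm]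
    · rw [OnePoint.coe_eq_coe, div_eq_iff hlv, leadingCoeff, leadingCoeff,
        show r = u.natDegree by omega, show v.natDegree = u.natDegree by omega, eq_comm]

lemma preimage_ratMap_infty_of_natDegree_eq_zero (hcop : IsCoprime u v) (hv : v ≠ 0)
    (hdeg : v.natDegree = 0) (hu : 0 < u.natDegree) : ratMap u v ⁻¹' {∞} = {∞} := by
  refine Set.eq_singleton_iff_unique_mem.mpr ⟨?_, fun P hP => ?_⟩
  · exact (ratMap_infty_eq_iff hv rfl ∞).mpr
      (coeff_eq_zero_of_natDegree_lt (by simp [hdeg, hu]))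
  · induction P using OnePoint.rec with
    | infty => rfl
    | coe z =>
      have hz : v.eval z = 0 := (ratMap_coe_eq_iff hcop z ∞).mp hP
      rw [eq_C_of_natDegree_eq_zero hdeg, eval_C] at hz
      exact absurd (by rw [eq_C_of_natDegree_eq_zero hdeg, hz, C_0]) hv

lemma natDegree_fiberPoly_le {r : ℕ} (hr : r = max u.natDegree v.natDegree) (Q : OnePoint F) :
    (fiberPoly u v Q).natDegree ≤ r := by
  induction Q using OnePoint.rec with
  | infty => simp only [fiberPoly_infty]; omega
  | coe c =>
    refine (natDegree_sub_le _ _).trans (max_le (by omega) ((natDegree_C_mul_le c v).trans ?_))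
    omega

lemma fiberPoly_ne_zero (hcop : IsCoprime u v) (hv : 0 < v.natDegree) (Q : OnePoint F) :
    fiberPoly u v Q ≠ 0 := by
  induction Q using OnePoint.rec with
  | infty => exact ne_zero_of_natDegree_gt hv
  | coe c =>
    intro h
    have hvu : v ∣ u := ⟨C c, by rw [fiberPoly_coe, sub_eq_zero] at h; rw [h, mul_comm]⟩
    exact hv.ne' (natDegree_eq_zero_of_isUnit (hcop.isUnit_of_dvd' hvu dvd_rfl))

lemma ratMap_surjective [IsAlgClosed F] (hcop : IsCoprime u v) (hv : 0 < v.natDegree) :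
    Function.Surjective (ratMap u v) := by
  intro Q
  by_cases hdeg : (fiberPoly u v Q).degree = 0
  · refine ⟨∞, (ratMap_infty_eq_iff (ne_zero_of_natDegree_gt hv) rfl Q).mpr ?_⟩
    exact coeff_eq_zero_of_natDegree_lt
      ((natDegree_eq_of_degree_eq_some hdeg).trans_lt (lt_max_of_lt_right hv))
  · obtain ⟨z, hz⟩ := IsAlgClosed.exists_root _ hdeg
    exact ⟨z, (ratMap_coe_eq_iff hcop z Q).mpr hz⟩

lemma finite_preimage_ratMap (hcop : IsCoprime u v) (hv : 0 < v.natDegree) (Q : OnePoint F) :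
    (ratMap u v ⁻¹' {Q}).Finite := by
  refine (((finite_setOfPred_isRoot (fiberPoly_ne_zero hcop hv Q)).image (↑)).insert ∞).subset
    fun P hP => ?_
  induction P using OnePoint.rec with
  | infty => exact Set.mem_insert _ _
  | coe z => exact Set.mem_insert_of_mem _ ⟨z, (ratMap_coe_eq_iff hcop z Q).mp hP, rfl⟩

/-- `(u, v) ↦ (u - c v, v)` and `(u, v) ↦ (v, -u)` have determinant one, so they preserve the
Wronskian. -/
lemma exists_wronskian_eq_wronskian_fiberPoly (u v : F[X]) (Q : OnePoint F) :
    ∃ h : F[X], h.natDegree ≤ max u.natDegree v.natDegree ∧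
      wronskian u v = wronskian (fiberPoly u v Q) h := by
  induction Q using OnePoint.rec with
  | infty =>
    refine ⟨-u, by rw [natDegree_neg]; exact le_max_left _ _, ?_⟩
    rw [fiberPoly_infty, wronskian_neg_right, wronskian_neg_eq]
  | coe c =>
    refine ⟨v, le_max_right _ _, ?_⟩
    simp only [fiberPoly_coe, wronskian, derivative_sub, derivative_mul, derivative_C]
    ring

lemma pow_sub_one_dvd_wronskian_of_pow_dvd {R : Type*} [CommRing R] {p g : R[X]} {n : ℕ}
    (hg : p ^ n ∣ g) (h : R[X]) : p ^ (n - 1) ∣ wronskian g h :=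
  dvd_sub (((pow_dvd_pow p (n.sub_le 1)).trans hg).mul_right _)
    ((pow_sub_one_dvd_derivative_of_pow_dvd hg).mul_right _)

lemma wronskian_ne_zero [CharZero F] (hcop : IsCoprime u v) (hv : 0 < v.natDegree) :
    wronskian u v ≠ 0 :=
  fun h => hv.ne' (derivative_eq_zero.mp (hcop.wronskian_eq_zero_iff.mp h).2)

lemma natDegree_wronskian_le [CharZero F] (hcop : IsCoprime u v) (hv : 0 < v.natDegree)
    {r : ℕ} (hr : r = max u.natDegree v.natDegree) :
    (wronskian u v).natDegree ≤ 2 * r - 2 := by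
  obtain ⟨h, hh, hW⟩ := exists_wronskian_eq_wronskian_fiberPoly u v (ratMap u v ∞)
  set g := fiberPoly u v (ratMap u v ∞)
  have hg : g.natDegree < r := by
    refine (natDegree_fiberPoly_le hr _).lt_of_ne fun hdeg =>
      fiberPoly_ne_zero hcop hv (ratMap u v ∞) ?_
    rw [← leadingCoeff_eq_zero, leadingCoeff, hdeg]
    exact (ratMap_infty_eq_iff (ne_zero_of_natDegree_gt hv) hr _).mp rfl
  have := natDegree_wronskian_lt_add (hW ▸ wronskian_ne_zero hcop hv)
  rw [← hW] at this
  omega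

end RationalMap

section RamifiedPoints

variable {F : Type*} [Field F] [IsAlgClosed F] {u v : F[X]}

lemma pow_dvd_fiberPoly_of_isTotallyRamified (hcop : IsCoprime u v) (hv : 0 < v.natDegree)
    {r : ℕ} (hr : r = max u.natDegree v.natDegree) {p : F}
    (hp : IsTotallyRamified (ratMap u v) p) :
    (X - C p) ^ r ∣ fiberPoly u v (ratMap u v p) := by
  set g := fiberPoly u v (ratMap u v p)
  have hdeg : g.natDegree = r := by
    refine le_antisymm (natDegree_fiberPoly_le hr _) (le_natDegree_of_ne_zero fun h => ?_)
    exact OnePoint.infty_ne_coe p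
      (hp.eq_of_apply_eq ((ratMap_infty_eq_iff (ne_zero_of_natDegree_gt hv) hr _).mpr h))
  have hroots : g.roots = Multiset.replicate r p := by
    refine Multiset.eq_replicate.mpr
      ⟨hdeg ▸ IsAlgClosed.card_roots_eq_natDegree, fun z hz => ?_⟩
    exact OnePoint.coe_injective
      (hp.eq_of_apply_eq ((ratMap_coe_eq_iff hcop z _).mpr (mem_roots'.mp hz).2))
  simpa [hroots] using prod_multiset_X_sub_C_dvd g

lemma pow_dvd_wronskian_of_isTotallyRamified (hcop : IsCoprime u v) (hv : 0 < v.natDegree)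
    {r : ℕ} (hr : r = max u.natDegree v.natDegree) {p : F}
    (hp : IsTotallyRamified (ratMap u v) p) : (X - C p) ^ (r - 1) ∣ wronskian u v := by
  obtain ⟨h, -, hW⟩ := exists_wronskian_eq_wronskian_fiberPoly u v (ratMap u v p)
  exact hW ▸ pow_sub_one_dvd_wronskian_of_pow_dvd
    (pow_dvd_fiberPoly_of_isTotallyRamified hcop hv hr hp) h

lemma natDegree_wronskian_le_of_isTotallyRamified_infty (hcop : IsCoprime u v)
    {r : ℕ} (hr : r = max u.natDegree v.natDegree)
    (hp : IsTotallyRamified (ratMap u v) ∞) : (wronskian u v).natDegree ≤ r - 1 := by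
  obtain ⟨h, hh, hW⟩ := exists_wronskian_eq_wronskian_fiberPoly u v (ratMap u v ∞)
  set g := fiberPoly u v (ratMap u v ∞)
  have hg : g.degree = 0 := by
    by_contra hdeg
    obtain ⟨z, hz⟩ := IsAlgClosed.exists_root _ hdeg
    exact OnePoint.coe_ne_infty z (hp.eq_of_apply_eq ((ratMap_coe_eq_iff hcop z _).mpr hz))
  have hg0 : g.natDegree = 0 := natDegree_eq_of_degree_eq_some hg
  have hh' : (derivative h).natDegree ≤ r - 1 := (natDegree_derivative_le h).trans (by omega)
  rw [hW, wronskian, derivative_of_natDegree_zero hg0, zero_mul, sub_zero]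
  exact natDegree_mul_le.trans (by omega)

variable [CharZero F]

lemma card_mul_le_natDegree_wronskian (hcop : IsCoprime u v) (hv : 0 < v.natDegree)
    {r : ℕ} (hr : r = max u.natDegree v.natDegree) (s : Finset F)
    (hs : ∀ p ∈ s, IsTotallyRamified (ratMap u v) p) :
    s.card * (r - 1) ≤ (wronskian u v).natDegree := by
  have hdvd : ∏ p ∈ s, (X - C p) ^ (r - 1) ∣ wronskian u v :=
    Finset.prod_dvd_of_coprime
      (fun p _ q _ hpq => (pairwise_coprime_X_sub_C Function.injective_id hpq).pow)
      (fun p hp => pow_dvd_wronskian_of_isTotallyRamified hcop hv hr (hs p hp))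
  have := natDegree_le_of_dvd hdvd (wronskian_ne_zero hcop hv)
  rwa [Finset.prod_pow, natDegree_pow, natDegree_finsetProd_X_sub_C_eq_card, mul_comm] at this

theorem eq_or_eq_or_eq_of_isTotallyRamified (hcop : IsCoprime u v) (hv : 0 < v.natDegree)
    {r : ℕ} (hr : r = max u.natDegree v.natDegree) (hr2 : 2 ≤ r) {a b c : OnePoint F}
    (ha : IsTotallyRamified (ratMap u v) a) (hb : IsTotallyRamified (ratMap u v) b)
    (hc : IsTotallyRamified (ratMap u v) c) : a = b ∨ a = c ∨ b = c := by
  have hW := natDegree_wronskian_le hcop hv hr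
  have two_finite_of_infty {p q : F} (hpq : p ≠ q) (hp : IsTotallyRamified (ratMap u v) p)
      (hq : IsTotallyRamified (ratMap u v) q) (hinf : IsTotallyRamified (ratMap u v) ∞) :
      False := by
    have := card_mul_le_natDegree_wronskian hcop hv hr {p, q} (by simp [hp, hq])
    have := natDegree_wronskian_le_of_isTotallyRamified_infty hcop hr hinf
    rw [Finset.card_pair hpq] at *
    omega
  have three_finite {p q w : F} (hpq : p ≠ q) (hpw : p ≠ w) (hqw : q ≠ w)
      (hp : IsTotallyRamified (ratMap u v) p) (hq : IsTotallyRamified (ratMap u v) q)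
      (hw : IsTotallyRamified (ratMap u v) w) : False := by
    have := card_mul_le_natDegree_wronskian hcop hv hr {p, q, w} (by simp [hp, hq, hw])
    rw [Finset.card_eq_three.mpr ⟨p, q, w, hpq, hpw, hqw, rfl⟩] at this
    omega
  induction a using OnePoint.rec <;> induction b using OnePoint.rec <;>
    induction c using OnePoint.rec <;> simp only [OnePoint.coe_eq_coe, true_or, or_true] <;>
    by_contra! hne
  · exact two_finite_of_infty hne.2.2 hb hc ha
  · exact two_finite_of_infty hne.2.1 ha hc hb
  · exact two_finite_of_infty hne.1 ha hb hc
  · exact three_finite hne.1 hne.2.1 hne.2.2 ha hb hc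

end RamifiedPoints

/-- If `φ = u/v` is a rational map on `ℙ¹(ℂ)` of degree `r ≥ 2` whose second iterate is
not a polynomial (i.e. `(φ²)⁻¹(∞) ≠ {∞}`), then the number of distinct poles of `φⁿ`
tends to infinity as `n → ∞`. -/
theorem poles_of_iterate_tendsto_atTop
    (u v : Polynomial ℂ) (hcop : IsCoprime u v) (r : ℕ)
    (hr : r = max u.natDegree v.natDegree) (hr2 : 2 ≤ r)
    (hnotpoly : (ratMap u v)^[2] ⁻¹' ({∞} : Set (OnePoint ℂ)) ≠ {∞}) :
    Tendsto (fun n : ℕ => ((ratMap u v)^[n] ⁻¹' ({∞} : Set (OnePoint ℂ))).ncard)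
      atTop atTop := by
  have hv₀ : v ≠ 0 := by
    rintro rfl
    have := natDegree_eq_zero_of_isUnit (isCoprime_zero_right.mp hcop)
    rw [natDegree_zero] at hr
    omega
  have hv : 0 < v.natDegree := by
    refine Nat.pos_of_ne_zero fun hdeg => hnotpoly ?_
    have hpoly : ratMap u v ⁻¹' {∞} = {∞} :=
      preimage_ratMap_infty_of_natDegree_eq_zero hcop hv₀ hdeg (by omega)
    exact Function.IsFixedPt.preimage_iterate hpoly 2
  exact tendsto_ncard_preimage_iterate (ratMap_surjective hcop hv) (finite_preimage_ratMap hcop hv)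
    (fun _ _ _ => eq_or_eq_or_eq_of_isTotallyRamified hcop hv hr hr2)
    (Set.finite_singleton ∞) (Set.singleton_nonempty ∞) hnotpoly
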